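/- arXiv:2007.09275 — 5 statements merged into one kernel-verified Lean document; each statement's English description precedes it below -/
import Mathlib

section
/- Let a and b be positive real numbers. There is a constant C = C(a,b) such that for every positive integer n, every positive integer m, and every integer k, | Σ_{1 ≤ j ≤ n−1, j ≡ k (mod m)} j^a·(n−j)^b − (n^{a+b+1}/m)·Γ(a+1)Γ(b+1)/Γ(a+b+2) | ≤ C·n^{a+b}. -/
/-!
Write the summand as `f x * g x` with `f x = x ^ a` increasing and `g x = (n - x) ^ b` decreasing,
both evaluated at the projection of `x` onto `[0, n]`, so that `f * g` vanishes outside `(0, n)`.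
The residue class `j ≡ k [ZMOD m]` then becomes a complete arithmetic progression `x₀ + t * m`
straddling `[0, n]`, and `m` times the sum over it is a left-endpoint Riemann sum for
`∫ x in 0..n, f x * g x = n ^ (a + b + 1) * B(a + 1, b + 1)`. On a step `[u, v]` the oscillation
of `f * g` is at most `f v * g u - f u * g v`; these bounds telescope to at most
`2 * n ^ a * n ^ b`, which after dividing by `m` is the error `2 * n ^ (a + b)`.
-/

open Finset MeasureTheory

theorem integral_rpow_mul_sub_rpow {a b N : ℝ} (ha : -1 < a) (hb : -1 < b) (hN : 0 < N) :
    ∫ x in 0..N, x ^ a * (N - x) ^ b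
      = N ^ (a + b + 1) * ProbabilityTheory.beta (a + 1) (b + 1) := by
  have h := Complex.betaIntegral_scaled ((a + 1 : ℝ) : ℂ) ((b + 1 : ℝ) : ℂ) hN
  have hlhs :
      ∫ x in 0..N, (x : ℂ) ^ (((a + 1 : ℝ) : ℂ) - 1) * ((N : ℂ) - x) ^ (((b + 1 : ℝ) : ℂ) - 1)
        = ((∫ x in 0..N, x ^ a * (N - x) ^ b : ℝ) : ℂ) := by
    rw [← intervalIntegral.integral_ofReal]
    refine intervalIntegral.integral_congr fun x hx => ?_
    rw [Set.uIcc_of_le hN.le] at hx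
    push_cast
    rw [Complex.ofReal_cpow hx.1, Complex.ofReal_cpow (sub_nonneg.2 hx.2)]
    push_cast; ring_nf
  have hexp : ((a + 1 : ℝ) : ℂ) + ((b + 1 : ℝ) : ℂ) - 1 = ((a + b + 1 : ℝ) : ℂ) := by
    push_cast; ring
  rw [hlhs, hexp, ← Complex.ofReal_cpow hN.le] at h
  rw [ProbabilityTheory.beta_eq_betaIntegralReal _ _ (by linarith) (by linarith)]
  simpa using congrArg Complex.re h

section MonotoneProduct

variable {f g : ℝ → ℝ} {A B : ℝ}

theorem intervalIntegrable_mul_of_monotone_of_antitone (hf : Monotone f) (hg : Antitone g)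
    (hg0 : ∀ x, 0 ≤ g x) (hgB : ∀ x, g x ≤ B) (u v : ℝ) :
    IntervalIntegrable (fun x => f x * g x) volume u v := by
  have hbound : ∀ x, ‖g x‖ ≤ B := fun x => by rw [Real.norm_of_nonneg (hg0 x)]; exact hgB x
  have hgm := hg.measurable.aestronglyMeasurable (μ := volume)
  have hfi : IntervalIntegrable f volume u v := hf.intervalIntegrable
  exact ⟨hfi.1.mul_bdd hgm.restrict (ae_of_all _ hbound),
    hfi.2.mul_bdd hgm.restrict (ae_of_all _ hbound)⟩

theorem abs_mul_sub_integral_le_of_monotone_of_antitone (hf : Monotone f) (hg : Antitone g)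
    (hf0 : ∀ x, 0 ≤ f x) (hg0 : ∀ x, 0 ≤ g x)
    (hint : ∀ u v, IntervalIntegrable (fun x => f x * g x) volume u v) {u v : ℝ} (huv : u ≤ v) :
    |(v - u) * (f u * g u) - ∫ x in u..v, f x * g x| ≤ (v - u) * (f v * g u - f u * g v) := by
  have hosc : ∀ x ∈ Set.uIoc u v, ‖f u * g u - f x * g x‖ ≤ f v * g u - f u * g v := by
    intro x hx
    rw [Set.uIoc_of_le huv] at hx
    have hlo : f u * g v ≤ f x * g x :=
      mul_le_mul (hf hx.1.le) (hg hx.2) (hg0 v) (hf0 x)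
    have hhi : f x * g x ≤ f v * g u :=
      mul_le_mul (hf hx.2) (hg hx.1.le) (hg0 x) (hf0 v)
    have hlo' : f u * g v ≤ f u * g u := mul_le_mul_of_nonneg_left (hg huv) (hf0 u)
    have hhi' : f u * g u ≤ f v * g u := mul_le_mul_of_nonneg_right (hf huv) (hg0 u)
    rw [Real.norm_eq_abs, abs_le]
    constructor <;> linarith
  have h := intervalIntegral.norm_integral_le_of_norm_le_const hosc
  rwa [intervalIntegral.integral_sub intervalIntegrable_const (hint u v),
    intervalIntegral.integral_const, smul_eq_mul, Real.norm_eq_abs,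
    abs_of_nonneg (sub_nonneg.2 huv), mul_comm _ (v - u)] at h

theorem sum_range_oscillation_le_of_monotone_of_antitone (hf : Monotone f) (hg : Antitone g)
    (hf0 : ∀ x, 0 ≤ f x) (hg0 : ∀ x, 0 ≤ g x) (hfA : ∀ x, f x ≤ A) (hgB : ∀ x, g x ≤ B)
    {x : ℕ → ℝ} (hx : Monotone x) (T : ℕ) :
    ∑ t ∈ range T, (f (x (t + 1)) * g (x t) - f (x t) * g (x (t + 1))) ≤ 2 * A * B := by
  have hstep : ∀ t ∈ range T, f (x (t + 1)) * g (x t) - f (x t) * g (x (t + 1)) ≤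
      (f (x (t + 1)) - f (x t)) * B + A * (g (x t) - g (x (t + 1))) := by
    intro t _
    have hft : f (x t) ≤ f (x (t + 1)) := hf (hx t.le_succ)
    have hgt : g (x (t + 1)) ≤ g (x t) := hg (hx t.le_succ)
    nlinarith [hfA (x t), hgB (x t)]
  calc _ ≤ ∑ t ∈ range T, ((f (x (t + 1)) - f (x t)) * B + A * (g (x t) - g (x (t + 1)))) :=
        sum_le_sum hstep
    _ = (f (x T) - f (x 0)) * B + A * (g (x 0) - g (x T)) := by
        rw [sum_add_distrib, ← sum_mul, ← mul_sum, sum_range_sub (fun t => f (x t)),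
          sum_range_sub' (fun t => g (x t))]
    _ ≤ 2 * A * B := by
        nlinarith [hf0 (x 0), hg0 (x T), hfA (x T), hgB (x 0), hf0 (x T), hg0 (x 0)]

theorem abs_mul_sum_sub_integral_le_of_monotone_of_antitone (hf : Monotone f) (hg : Antitone g)
    (hf0 : ∀ x, 0 ≤ f x) (hg0 : ∀ x, 0 ≤ g x) (hfA : ∀ x, f x ≤ A) (hgB : ∀ x, g x ≤ B)
    {h : ℝ} (hh : 0 ≤ h) (x₀ : ℝ) (T : ℕ) :
    |h * ∑ t ∈ range T, f (x₀ + t * h) * g (x₀ + t * h) - ∫ x in x₀..x₀ + T * h, f x * g x|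
      ≤ 2 * h * A * B := by
  set x : ℕ → ℝ := fun t => x₀ + t * h
  have hx : Monotone x := fun s t hst => by
    simp only [x]; gcongr
  have hint := intervalIntegrable_mul_of_monotone_of_antitone hf hg hg0 hgB
  have hsplit : ∫ y in x₀..x₀ + T * h, f y * g y
      = ∑ t ∈ range T, ∫ y in x t..x (t + 1), f y * g y := by
    rw [intervalIntegral.sum_integral_adjacent_intervals fun t _ => hint _ _]
    simp [x]
  have hlen : ∀ t, x (t + 1) - x t = h := fun t => by simp only [x]; push_cast; ring
  calc _ = |∑ t ∈ range T, ((x (t + 1) - x t) * (f (x t) * g (x t))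
          - ∫ y in x t..x (t + 1), f y * g y)| := by
        simp only [hlen, hsplit, sum_sub_distrib, mul_sum]
        rfl
    _ ≤ ∑ t ∈ range T,
          (x (t + 1) - x t) * (f (x (t + 1)) * g (x t) - f (x t) * g (x (t + 1))) :=
        (abs_sum_le_sum_abs _ _).trans <| sum_le_sum fun t _ =>
          abs_mul_sub_integral_le_of_monotone_of_antitone hf hg hf0 hg0 hint (hx t.le_succ)
    _ = h * ∑ t ∈ range T, (f (x (t + 1)) * g (x t) - f (x t) * g (x (t + 1))) := by
        simp only [hlen, ← mul_sum]
    _ ≤ h * (2 * A * B) := mul_le_mul_of_nonneg_left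
        (sum_range_oscillation_le_of_monotone_of_antitone hf hg hf0 hg0 hfA hgB hx T) hh
    _ = 2 * h * A * B := by ring

end MonotoneProduct

theorem sum_filter_modEq_eq_sum_range {M : Type*} [AddCommMonoid M] {φ : ℤ → M} {n m : ℕ}
    (hm : 0 < m) (k : ℤ) (hφ : ∀ j, φ j ≠ 0 → 0 < j ∧ j < n) :
    ∑ j ∈ (Ico 1 n).filter (fun j : ℕ => (j : ℤ) ≡ k [ZMOD m]), φ j
      = ∑ t ∈ range (n / m + 2), φ (k % m - m + t * m) := by
  have hrep : ∀ j : ℕ, (j : ℤ) ≡ k [ZMOD m] → k % m - m + ((j / m + 1 : ℕ) : ℤ) * m = j := by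
    intro j hj
    have h := Int.emod_add_mul_ediv (j : ℤ) m
    rw [hj] at h
    push_cast
    linear_combination h
  have hmodEq : ∀ t : ℕ, k % m - m + t * m ≡ k [ZMOD m] := by
    intro t
    have : k % m - m + t * m = k % m + (t - 1) * m := by ring
    rw [Int.ModEq, this, Int.add_mul_emod_self_right, Int.emod_emod]
  symm
  refine sum_bij_ne_zero (fun t _ _ => (k % m - m + t * m).toNat) ?_ ?_ ?_ ?_
  · intro t _ ht
    obtain ⟨h0, hn⟩ := hφ _ ht
    simp only [mem_filter, mem_Ico, Int.toNat_of_nonneg h0.le]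
    exact ⟨by omega, hmodEq t⟩
  · intro t₁ _ ht₁ t₂ _ ht₂ h
    have h₁ := (hφ _ ht₁).1
    have h₂ := (hφ _ ht₂).1
    have : (t₁ : ℤ) * m = t₂ * m := by omega
    exact_mod_cast mul_right_cancel₀ (by positivity) this
  · intro j hj _
    obtain ⟨hjn, hjk⟩ := mem_filter.1 hj
    have hj := hrep j hjk
    refine ⟨j / m + 1, ?_, by rwa [hj], by rw [hj]; simp⟩
    have := Nat.div_le_div_right (c := m) (mem_Ico.1 hjn).2.le
    rw [mem_range]; omega
  · intro t _ ht
    rw [Int.toNat_of_nonneg (hφ _ ht).1.le]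

theorem abs_sum_filter_modEq_sub_integral_div_le {f g : ℝ → ℝ} {A B : ℝ} (hf : Monotone f)
    (hg : Antitone g) (hf0 : ∀ x, 0 ≤ f x) (hg0 : ∀ x, 0 ≤ g x) (hfA : ∀ x, f x ≤ A)
    (hgB : ∀ x, g x ≤ B) {n m : ℕ} (hsupp : ∀ x, f x * g x ≠ 0 → 0 < x ∧ x < n) (hm : 0 < m)
    (k : ℤ) :
    |∑ j ∈ (Ico 1 n).filter (fun j : ℕ => (j : ℤ) ≡ k [ZMOD m]), f j * g j
      - (∫ x in 0..(n : ℝ), f x * g x) / m| ≤ 2 * A * B := by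
  set x₀ : ℤ := k % m - m
  set T : ℕ := n / m + 2
  have hm' : (0 : ℝ) < m := by exact_mod_cast hm
  have hsum : ∑ j ∈ (Ico 1 n).filter (fun j : ℕ => (j : ℤ) ≡ k [ZMOD m]), f j * g j
      = ∑ t ∈ range T, f (x₀ + t * m) * g (x₀ + t * m) := by
    have := sum_filter_modEq_eq_sum_range (φ := fun j : ℤ => f j * g j) hm k
      fun j hj => by exact_mod_cast hsupp j hj
    simp only [x₀, T]
    push_cast at this ⊢
    exact this
  have hx₀ : x₀ ≤ 0 := by
    have := Int.emod_lt_of_pos k (by exact_mod_cast hm : (0 : ℤ) < m)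
    omega
  have hxT : (n : ℤ) ≤ x₀ + T * m := by
    have h₁ := Int.emod_nonneg k (by exact_mod_cast hm.ne' : (m : ℤ) ≠ 0)
    have h₂ : n < n / m * m + m := Nat.lt_div_mul_add hm
    have h₃ : ((n / m * m + m : ℕ) : ℤ) ≤ x₀ + T * m := by
      simp only [x₀, T]; push_cast; linarith
    omega
  have hsupp' : Function.support (fun x => f x * g x) ⊆ Set.Ioc 0 n :=
    fun x hx => ⟨(hsupp x hx).1, (hsupp x hx).2.le⟩
  have hint : ∫ x in x₀..x₀ + T * m, f x * g x = ∫ x in 0..(n : ℝ), f x * g x := by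
    rw [intervalIntegral.integral_eq_integral_of_support_subset hsupp',
      intervalIntegral.integral_eq_integral_of_support_subset]
    refine hsupp'.trans (Set.Ioc_subset_Ioc (by exact_mod_cast hx₀) ?_)
    exact_mod_cast hxT
  have hriemann := abs_mul_sum_sub_integral_le_of_monotone_of_antitone hf hg hf0 hg0 hfA hgB
    hm'.le x₀ T
  rw [hsum, ← hint, sub_div' hm'.ne', abs_div, abs_of_pos hm', div_le_iff₀ hm']
  exact (congrArg (fun s => |s - _|) (mul_comm _ _)).trans_le (hriemann.trans_eq (by ring))

section ProjIcc

variable {N a b : ℝ} (hN : 0 ≤ N)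

theorem monotone_projIcc_rpow (ha : 0 ≤ a) : Monotone fun x => (Set.projIcc 0 N hN x : ℝ) ^ a :=
  fun _ _ hxy => Real.rpow_le_rpow (Set.projIcc 0 N hN _).2.1 (Set.monotone_projIcc hN hxy) ha

theorem antitone_sub_projIcc_rpow (hb : 0 ≤ b) :
    Antitone fun x => (N - Set.projIcc 0 N hN x) ^ b :=
  fun _ _ hxy => Real.rpow_le_rpow (sub_nonneg.2 (Set.projIcc 0 N hN _).2.2)
    (sub_le_sub_left (Subtype.coe_le_coe.2 (Set.monotone_projIcc hN hxy)) N) hb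

end ProjIcc

theorem abs_sum_filter_modEq_rpow_mul_sub_integral_div_le {a b : ℝ} (ha : 0 < a) (hb : 0 < b)
    {n m : ℕ} (hm : 0 < m) (k : ℤ) :
    |∑ j ∈ (Ico 1 n).filter (fun j : ℕ => (j : ℤ) ≡ k [ZMOD m]),
        (j : ℝ) ^ a * ((n - j : ℕ) : ℝ) ^ b - (∫ x in 0..(n : ℝ), x ^ a * (n - x) ^ b) / m|
      ≤ 2 * (n : ℝ) ^ a * (n : ℝ) ^ b := by
  have hN : (0 : ℝ) ≤ n := n.cast_nonneg
  set p : ℝ → ℝ := fun x => Set.projIcc 0 (n : ℝ) hN x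
  have hp : ∀ x ∈ Set.Icc (0 : ℝ) n, p x = x := fun x hx =>
    congrArg Subtype.val (Set.projIcc_of_mem hN hx)
  have hsupp : ∀ x, p x ^ a * (n - p x) ^ b ≠ 0 → 0 < x ∧ x < n := by
    intro x hx
    by_contra! h
    rcases le_or_gt x 0 with hx0 | hx0
    · simp [p, Set.projIcc_of_le_left hN hx0, Real.zero_rpow ha.ne'] at hx
    · simp [p, Set.projIcc_of_right_le hN (h hx0), Real.zero_rpow hb.ne'] at hx
  have hsum : ∀ j ∈ (Ico 1 n).filter (fun j : ℕ => (j : ℤ) ≡ k [ZMOD m]),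
      (j : ℝ) ^ a * ((n - j : ℕ) : ℝ) ^ b = p j ^ a * (n - p j) ^ b := by
    intro j hj
    have hjn : j ≤ n := (mem_Ico.1 (mem_filter.1 hj).1).2.le
    rw [hp j ⟨j.cast_nonneg, by exact_mod_cast hjn⟩, Nat.cast_sub hjn]
  have hint : ∫ x in 0..(n : ℝ), x ^ a * (n - x) ^ b
      = ∫ x in 0..(n : ℝ), p x ^ a * (n - p x) ^ b :=
    intervalIntegral.integral_congr fun x hx => by
      rw [hp x (Set.uIcc_of_le hN ▸ hx)]
  rw [sum_congr rfl hsum, hint]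
  exact abs_sum_filter_modEq_sub_integral_div_le (monotone_projIcc_rpow hN ha.le)
    (antitone_sub_projIcc_rpow hN hb.le) (fun x => Real.rpow_nonneg (Set.projIcc 0 _ hN x).2.1 a)
    (fun x => Real.rpow_nonneg (sub_nonneg.2 (Set.projIcc 0 _ hN x).2.2) b)
    (fun x => Real.rpow_le_rpow (Set.projIcc 0 _ hN x).2.1 (Set.projIcc 0 _ hN x).2.2 ha.le)
    (fun x => Real.rpow_le_rpow (sub_nonneg.2 (Set.projIcc 0 _ hN x).2.2)
      (sub_le_self _ (Set.projIcc 0 _ hN x).2.1) hb.le) hsupp hm k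

theorem stmt4 (a b : ℝ) (ha : 0 < a) (hb : 0 < b) :
    ∃ C : ℝ, ∀ (n m : ℕ), 0 < n → 0 < m → ∀ k : ℤ,
      |(∑ j ∈ (Finset.Ico 1 n).filter (fun j : ℕ => (j : ℤ) ≡ k [ZMOD (m : ℤ)]),
          (j : ℝ) ^ a * ((n - j : ℕ) : ℝ) ^ b)
        - (n : ℝ) ^ (a + b + 1) / (m : ℝ)
            * (Real.Gamma (a + 1) * Real.Gamma (b + 1) / Real.Gamma (a + b + 2))|
      ≤ C * (n : ℝ) ^ (a + b) := by
  refine ⟨2, fun n m hn hm k => ?_⟩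
  have hbeta : Real.Gamma (a + 1) * Real.Gamma (b + 1) / Real.Gamma (a + b + 2)
      = ProbabilityTheory.beta (a + 1) (b + 1) := by
    rw [ProbabilityTheory.beta]; ring_nf
  rw [hbeta, div_mul_eq_mul_div,
    ← integral_rpow_mul_sub_rpow (by linarith) (by linarith) (Nat.cast_pos.2 hn)]
  calc _ ≤ 2 * (n : ℝ) ^ a * (n : ℝ) ^ b :=
        abs_sum_filter_modEq_rpow_mul_sub_integral_div_le ha hb hm k
    _ = 2 * (n : ℝ) ^ (a + b) := by rw [Real.rpow_add' n.cast_nonneg (by linarith)]; ring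
end

section
/- Let r and s be complex numbers with Re(r) > 1 and Re(s) > 1. Then the double series Σ over pairs of positive integers (n, m) with gcd(m, n) = 1 of n^{−r}·m^{−s} converges absolutely and equals ζ(r)·ζ(s)/ζ(r+s). -/
/-!
Every pair `(a, b) ≠ (0, 0)` of natural numbers is uniquely `d • (n, m)` with `d ≥ 1` and
`(n, m)` coprime, namely `d = gcd a b`. Since `(d n)^{-r} (d m)^{-s} = d^{-(r+s)} n^{-r} m^{-s}`,
regrouping the absolutely convergent double series `ζ(r) ζ(s) = ∑ a^{-r} b^{-s}` along this
decomposition gives `ζ(r + s)` times the sum over coprime pairs.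
-/

open Complex Function

def coprimePairs : Set (ℕ × ℕ) := {p | p.1.Coprime p.2}

def scaleCoprime (q : ℕ+ × coprimePairs) : ℕ × ℕ :=
  (q.1 * q.2.1.1, q.1 * q.2.1.2)

lemma scaleCoprime_injective : Injective scaleCoprime := by
  rintro ⟨d, ⟨n, m⟩, hnm⟩ ⟨d', ⟨n', m'⟩, hnm'⟩ h
  simp only [scaleCoprime, Prod.mk.injEq] at h
  obtain ⟨hn, hm⟩ := h
  have hd : (d : ℕ) = d' := by
    have hgcd : Nat.gcd (d * n) (d * m) = Nat.gcd (d' * n') (d' * m') := by rw [hn, hm]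
    rwa [Nat.gcd_mul_left, Nat.gcd_mul_left, hnm.gcd_eq_one, Nat.Coprime.gcd_eq_one hnm',
      mul_one, mul_one] at hgcd
  obtain rfl := PNat.coe_injective hd
  obtain rfl := Nat.eq_of_mul_eq_mul_left d.pos hn
  obtain rfl := Nat.eq_of_mul_eq_mul_left d.pos hm
  rfl

lemma range_scaleCoprime : Set.range scaleCoprime = {0}ᶜ := by
  ext ⟨a, b⟩
  constructor
  · rintro ⟨⟨d, ⟨n, m⟩, hnm⟩, h⟩ h0
    simp only [scaleCoprime, Prod.mk.injEq, Set.mem_singleton_iff, Prod.mk_eq_zero] at h h0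
    obtain ⟨rfl, rfl⟩ := h0
    obtain ⟨rfl, rfl⟩ : n = 0 ∧ m = 0 := by simpa [d.ne_zero] using h
    simp [coprimePairs] at hnm
  · intro hab
    have hg : 0 < Nat.gcd a b :=
      Nat.pos_of_ne_zero fun h => hab (by simp_all [Nat.gcd_eq_zero_iff])
    refine ⟨(⟨_, hg⟩, ⟨(a / Nat.gcd a b, b / Nat.gcd a b), Nat.coprime_div_gcd_div_gcd hg⟩), ?_⟩
    simp [scaleCoprime, Nat.mul_div_cancel' (Nat.gcd_dvd_left a b),
      Nat.mul_div_cancel' (Nat.gcd_dvd_right a b)]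

lemma tsum_comp_scaleCoprime {α : Type*} [AddCommMonoid α] [TopologicalSpace α]
    {f : ℕ × ℕ → α} (hf : f 0 = 0) : ∑' q, f (scaleCoprime q) = ∑' p, f p :=
  scaleCoprime_injective.tsum_eq fun p hp =>
    range_scaleCoprime ▸ fun h : p = 0 => hp (h ▸ hf)

section PowerSums

variable {r s : ℂ}

lemma summable_norm_natCast_cpow_neg (hr : 1 < r.re) :
    Summable fun n : ℕ => ‖(n : ℂ) ^ (-r)‖ := by
  simp only [norm_natCast_cpow_of_re_ne_zero _ (re_neg_ne_zero_of_one_lt_re hr), neg_re]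
  exact Real.summable_nat_rpow.mpr (by linarith)

lemma zero_cpow_neg_of_one_lt_re (hr : 1 < r.re) : (0 : ℂ) ^ (-r) = 0 :=
  zero_cpow (neg_ne_zero.mpr (ne_zero_of_one_lt_re hr))

lemma riemannZeta_eq_tsum_natCast_cpow_neg (hr : 1 < r.re) :
    riemannZeta r = ∑' n : ℕ, (n : ℂ) ^ (-r) := by
  simp only [zeta_eq_tsum_one_div_nat_cpow hr, cpow_neg, one_div]

noncomputable def pairTerm (r s : ℂ) (p : ℕ × ℕ) : ℂ := (p.1 : ℂ) ^ (-r) * (p.2 : ℂ) ^ (-s)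

lemma pairTerm_fst_zero (hr : 1 < r.re) (m : ℕ) : pairTerm r s (0, m) = 0 := by
  simp [pairTerm, zero_cpow_neg_of_one_lt_re hr]

lemma pairTerm_snd_zero (hs : 1 < s.re) (n : ℕ) : pairTerm r s (n, 0) = 0 := by
  simp [pairTerm, zero_cpow_neg_of_one_lt_re hs]

lemma pairTerm_scaleCoprime (q : ℕ+ × coprimePairs) :
    pairTerm r s (scaleCoprime q) = ((q.1 : ℕ) : ℂ) ^ (-(r + s)) * pairTerm r s q.2 := by
  have hd : ((q.1 : ℕ) : ℂ) ≠ 0 := Nat.cast_ne_zero.mpr q.1.ne_zero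
  simp only [pairTerm, scaleCoprime, Nat.cast_mul, natCast_mul_natCast_cpow, neg_add,
    cpow_add _ _ hd]
  ring

lemma summable_norm_pairTerm (hr : 1 < r.re) (hs : 1 < s.re) :
    Summable fun p => ‖pairTerm r s p‖ :=
  Summable.mul_norm (f := fun n : ℕ => (n : ℂ) ^ (-r)) (g := fun n : ℕ => (n : ℂ) ^ (-s))
    (summable_norm_natCast_cpow_neg hr) (summable_norm_natCast_cpow_neg hs)

lemma tsum_pairTerm (hr : 1 < r.re) (hs : 1 < s.re) :
    ∑' p, pairTerm r s p = riemannZeta r * riemannZeta s := by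
  rw [riemannZeta_eq_tsum_natCast_cpow_neg hr, riemannZeta_eq_tsum_natCast_cpow_neg hs,
    tsum_mul_tsum_of_summable_norm (summable_norm_natCast_cpow_neg hr)
      (summable_norm_natCast_cpow_neg hs)]
  rfl

lemma riemannZeta_add_mul_tsum_coprime (hr : 1 < r.re) (hs : 1 < s.re) :
    riemannZeta (r + s) * ∑' p, coprimePairs.indicator (pairTerm r s) p =
      riemannZeta r * riemannZeta s := by
  have hrs : 1 < (r + s).re := by rw [add_re]; linarith
  have hpnat : Summable fun d : ℕ+ => ‖((d : ℕ) : ℂ) ^ (-(r + s))‖ :=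
    (summable_norm_natCast_cpow_neg hrs).comp_injective PNat.coe_injective
  have hcop : Summable fun c : coprimePairs => ‖pairTerm r s c‖ :=
    (summable_norm_pairTerm hr hs).subtype _
  rw [← tsum_pairTerm hr hs, ← tsum_comp_scaleCoprime (pairTerm_fst_zero hr 0),
    riemannZeta_eq_tsum_natCast_cpow_neg hrs, ← tsum_subtype,
    ← tsum_pnat_eq_tsum_of_eq_zero (by rw [Nat.cast_zero, zero_cpow_neg_of_one_lt_re hrs]),
    tsum_mul_tsum_of_summable_norm hpnat hcop]
  exact tsum_congr fun q => (pairTerm_scaleCoprime q).symm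

lemma coprimePairs_indicator_pairTerm (hr : 1 < r.re) (hs : 1 < s.re) (p : ℕ × ℕ) :
    coprimePairs.indicator (pairTerm r s) p =
      if 0 < p.1 ∧ 0 < p.2 ∧ Nat.gcd p.2 p.1 = 1 then
        (p.1 : ℂ) ^ (-r) * (p.2 : ℂ) ^ (-s) else 0 := by
  obtain ⟨n, m⟩ := p
  rcases Nat.eq_zero_or_pos n with rfl | hn
  · simp [pairTerm_fst_zero hr]
  rcases Nat.eq_zero_or_pos m with rfl | hm
  · simp [pairTerm_snd_zero hs]
  simp only [Set.indicator, coprimePairs, Set.mem_ofPred_eq, pairTerm, hn, hm, true_and,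
    Nat.gcd_comm m n, Nat.Coprime]
  congr

end PowerSums

theorem stmt5 (r s : ℂ) (hr : 1 < r.re) (hs : 1 < s.re) :
    Summable (fun p : ℕ × ℕ =>
      ‖if 0 < p.1 ∧ 0 < p.2 ∧ Nat.gcd p.2 p.1 = 1 then
          (p.1 : ℂ) ^ (-r) * (p.2 : ℂ) ^ (-s) else 0‖) ∧
    (∑' p : ℕ × ℕ,
        if 0 < p.1 ∧ 0 < p.2 ∧ Nat.gcd p.2 p.1 = 1 then
          (p.1 : ℂ) ^ (-r) * (p.2 : ℂ) ^ (-s) else 0)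
      = riemannZeta r * riemannZeta s / riemannZeta (r + s) := by
  have hrs : 1 < (r + s).re := by rw [add_re]; linarith
  simp only [← coprimePairs_indicator_pairTerm hr hs, norm_indicator_eq_indicator_norm]
  refine ⟨(summable_norm_pairTerm hr hs).indicator _, ?_⟩
  rw [eq_div_iff (riemannZeta_ne_zero_of_one_lt_re hrs), mul_comm,
    riemannZeta_add_mul_tsum_coprime hr hs]
end

section
/- Let a > 0 be real, let d and n be positive integers, and let s be a complex number with Re(s) > a + 1. Then Σ over positive integers k with k ≡ n (mod d) of σ_a(k)·k^{−s} converges absolutely and equals d^{a−2s} · Σ over pairs (e₁, e₂) with 1 ≤ e₁, e₂ ≤ d and e₁e₂ ≡ n (mod d) of ζ(s−a, e₁/d)·ζ(s, e₂/d). -/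
open Finset

/-- `σ_a(n) = ∑_{d ∣ n} d^a` for real `a`. -/
noncomputable def sigmaR (a : ℝ) (n : ℕ) : ℝ := ∑ d ∈ n.divisors, (d : ℝ) ^ a

/-- The Hurwitz zeta function `ζ(s, x)` for `x ∈ (0, 1]` (analytic continuation of
`∑_{n ≥ 0} (n + x)^{-s}`); note that `ζ(s, 1) = ζ(s)`. -/
noncomputable def hzeta (s : ℂ) (x : ℝ) : ℂ := HurwitzZeta.hurwitzZeta (x : UnitAddCircle) s

/-! Summed over the residue pairs `(e₁, e₂)` with `e₁ e₂ ≡ n (mod d)`, the Dirichlet convolutions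
of `m ↦ [m ≡ e₁] m^a` with `l ↦ [l ≡ e₂]` add up to `k ↦ [k ≡ n] σ_a(k)`, since each factorisation
`k = m l` is counted for exactly one pair. So the series splits into finitely many products of
Dirichlet series over arithmetic progressions, and each of these is the L-function of the indicator
of a residue class in `ZMod d`, namely `d^{b-s} ζ(s-b, e/d)`. -/

open LSeries LSeries.notation

noncomputable def residueClassPow (d e : ℕ) (b : ℂ) (m : ℕ) : ℂ :=
  if m ≡ e [MOD d] then (m : ℂ) ^ b else 0

def residuePairs (d n : ℕ) : Finset (ℕ × ℕ) :=
  (Icc 1 d ×ˢ Icc 1 d).filter fun e ↦ e.1 * e.2 ≡ n [MOD d]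

lemma Nat.exists_mem_Icc_modEq {d : ℕ} (hd : 0 < d) (m : ℕ) : ∃ e ∈ Icc 1 d, m ≡ e [MOD d] := by
  refine ⟨(m + d - 1) % d + 1, mem_Icc.mpr ⟨by omega, Nat.mod_lt _ hd⟩, ?_⟩
  calc m ≡ m + d [MOD d] := Nat.add_modEq_right.symm
    _ = (m + d - 1) + 1 := by omega
    _ ≡ (m + d - 1) % d + 1 [MOD d] := (Nat.mod_modEq _ _).symm.add_right 1

lemma Nat.ModEq.eq_of_mem_Icc {d a b : ℕ} (h : a ≡ b [MOD d]) (ha : a ∈ Icc 1 d)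
    (hb : b ∈ Icc 1 d) : a = b := by
  rw [mem_Icc] at ha hb
  have h' : a - 1 ≡ b - 1 [MOD d] :=
    Nat.ModEq.add_right_cancel' 1 (by rwa [Nat.sub_add_cancel ha.1, Nat.sub_add_cancel hb.1])
  have := h'.eq_of_lt_of_lt (by omega) (by omega)
  omega

lemma sum_residuePairs_ite_modEq {d : ℕ} (hd : 0 < d) (n m l : ℕ) (c : ℂ) :
    ∑ e ∈ residuePairs d n, (if m ≡ e.1 [MOD d] ∧ l ≡ e.2 [MOD d] then c else 0)
      = if m * l ≡ n [MOD d] then c else 0 := by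
  obtain ⟨r₁, hr₁, hm⟩ := Nat.exists_mem_Icc_modEq hd m
  obtain ⟨r₂, hr₂, hl⟩ := Nat.exists_mem_Icc_modEq hd l
  have hiff : ∀ e ∈ residuePairs d n,
      (m ≡ e.1 [MOD d] ∧ l ≡ e.2 [MOD d]) ↔ e = (r₁, r₂) := by
    intro e he
    obtain ⟨⟨he₁, he₂⟩, -⟩ := by simpa only [residuePairs, mem_filter, mem_product] using he
    constructor
    · rintro ⟨h₁, h₂⟩
      exact Prod.ext ((h₁.symm.trans hm).eq_of_mem_Icc he₁ hr₁)
        ((h₂.symm.trans hl).eq_of_mem_Icc he₂ hr₂)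
    · rintro rfl
      exact ⟨hm, hl⟩
  have hmem : (r₁, r₂) ∈ residuePairs d n ↔ m * l ≡ n [MOD d] := by
    simp only [residuePairs, mem_filter, mem_product, hr₁, hr₂, true_and]
    exact ⟨(hm.mul hl).trans, (hm.mul hl).symm.trans⟩
  rw [sum_congr rfl fun e he ↦ if_congr (hiff e he) rfl rfl, sum_ite_eq', if_congr hmem rfl rfl]

lemma residueClassPow_mul_residueClassPow_zero (d e₁ e₂ : ℕ) (b : ℂ) (m l : ℕ) :
    residueClassPow d e₁ b m * residueClassPow d e₂ 0 l
      = if m ≡ e₁ [MOD d] ∧ l ≡ e₂ [MOD d] then (m : ℂ) ^ b else 0 := by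
  unfold residueClassPow
  split_ifs <;> simp_all

lemma sum_residuePairs_convolution {d : ℕ} (hd : 0 < d) (n : ℕ) (b : ℂ) (k : ℕ) :
    ∑ e ∈ residuePairs d n, (residueClassPow d e.1 b ⍟ residueClassPow d e.2 0) k
      = if k ≡ n [MOD d] then ∑ m ∈ k.divisors, (m : ℂ) ^ b else 0 := by
  simp_rw [convolution_def, residueClassPow_mul_residueClassPow_zero]
  rw [sum_comm]
  simp_rw [sum_residuePairs_ite_modEq hd]
  rw [← Nat.sum_divisorsAntidiagonal (fun m _ ↦ (m : ℂ) ^ b)]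
  split_ifs with hk
  · refine sum_congr rfl fun p hp ↦ ?_
    rw [(Nat.mem_divisorsAntidiagonal.mp hp).1, if_pos hk]
  · refine sum_eq_zero fun p hp ↦ ?_
    rw [(Nat.mem_divisorsAntidiagonal.mp hp).1, if_neg hk]

lemma LSeries.term_mul_natCast_cpow (f : ℕ → ℂ) (b s : ℂ) :
    term (fun m ↦ f m * (m : ℂ) ^ b) s = term f (s - b) := by
  ext m
  rcases eq_or_ne m 0 with rfl | hm
  · simp
  · rw [term_of_ne_zero hm, term_of_ne_zero hm, Complex.cpow_sub _ _ (Nat.cast_ne_zero.mpr hm),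
      div_div_eq_mul_div]

lemma LSeriesHasSum_residueClassPow {d : ℕ} [NeZero d] (e : ℕ) {b s : ℂ} (hs : 1 < (s - b).re) :
    LSeriesHasSum (residueClassPow d e b) s ((d : ℂ) ^ (b - s) * hzeta (s - b) (e / d)) := by
  let Φ : ZMod d → ℂ := fun x ↦ if x = e then 1 else 0
  have hterm : term (residueClassPow d e b) s = term (Φ ·) (s - b) := by
    rw [← term_mul_natCast_cpow]
    congr 1
    ext m
    simp [residueClassPow, Φ, ZMod.natCast_eq_natCast_iff]
  have hL : ZMod.LFunction Φ (s - b) = (d : ℂ) ^ (b - s) * hzeta (s - b) (e / d) := by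
    simp [ZMod.LFunction, Φ, hzeta, ZMod.toAddCircle_natCast]
  rw [LSeriesHasSum, hterm, ← hL, ZMod.LFunction_eq_LSeries Φ hs]
  exact (ZMod.LSeriesSummable_of_one_lt_re Φ hs).LSeriesHasSum

lemma LSeriesHasSum_residueClassPow_convolution {d : ℕ} [NeZero d] (e₁ e₂ : ℕ) {b s : ℂ}
    (hsb : 1 < (s - b).re) (hs : 1 < s.re) :
    LSeriesHasSum (residueClassPow d e₁ b ⍟ residueClassPow d e₂ 0) s
      ((d : ℂ) ^ (b - 2 * s) * (hzeta (s - b) (e₁ / d) * hzeta s (e₂ / d))) := by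
  have h₂ := LSeriesHasSum_residueClassPow (d := d) e₂ (b := 0) (s := s) (by simpa using hs)
  rw [sub_zero, zero_sub] at h₂
  convert (LSeriesHasSum_residueClassPow (d := d) e₁ hsb).convolution h₂ using 1
  rw [mul_mul_mul_comm, ← Complex.cpow_add _ _ (Nat.cast_ne_zero.mpr (NeZero.ne d))]
  ring_nf

lemma ofReal_sigmaR (a : ℝ) (k : ℕ) :
    (sigmaR a k : ℂ) = ∑ m ∈ k.divisors, (m : ℂ) ^ (a : ℂ) := by
  simp [sigmaR, Complex.ofReal_cpow]

lemma term_sum_residuePairs_convolution {d : ℕ} (hd : 0 < d) (n : ℕ) (a : ℝ) (s : ℂ) :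
    term (∑ e ∈ residuePairs d n, residueClassPow d e.1 a ⍟ residueClassPow d e.2 0) s
      = fun k ↦ if 0 < k ∧ k ≡ n [MOD d] then (sigmaR a k : ℂ) * (k : ℂ) ^ (-s) else 0 := by
  ext k
  rcases eq_or_ne k 0 with rfl | hk
  · simp
  rw [term_of_ne_zero hk, Finset.sum_apply, sum_residuePairs_convolution hd, ofReal_sigmaR]
  split_ifs <;> simp_all [Complex.cpow_neg, div_eq_mul_inv, Nat.pos_iff_ne_zero]

theorem stmt7_general (a : ℝ) (ha : 0 < a) (d n : ℕ) (hd : 0 < d)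
    (s : ℂ) (hs : a + 1 < s.re) :
    Summable (fun k : ℕ =>
      ‖if 0 < k ∧ k ≡ n [MOD d] then (sigmaR a k : ℂ) * (k : ℂ) ^ (-s) else 0‖) ∧
    (∑' k : ℕ, if 0 < k ∧ k ≡ n [MOD d] then (sigmaR a k : ℂ) * (k : ℂ) ^ (-s) else 0)
      = (d : ℂ) ^ ((a : ℂ) - 2 * s) *
          ∑ e ∈ (Finset.Icc 1 d ×ˢ Finset.Icc 1 d).filter
              (fun e : ℕ × ℕ => e.1 * e.2 ≡ n [MOD d]),
            hzeta (s - (a : ℂ)) ((e.1 : ℝ) / d) * hzeta s ((e.2 : ℝ) / d) := by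
  have : NeZero d := ⟨hd.ne'⟩
  have hsa : 1 < (s - a).re := by simp only [Complex.sub_re, Complex.ofReal_re]; linarith
  have hsum := LSeriesHasSum.sum (S := residuePairs d n) fun e _ ↦
    LSeriesHasSum_residueClassPow_convolution (d := d) e.1 e.2 hsa (by linarith)
  rw [LSeriesHasSum, term_sum_residuePairs_convolution hd, ← mul_sum] at hsum
  exact ⟨summable_norm_iff.mpr hsum.summable, hsum.tsum_eq⟩

theorem stmt7 (a : ℝ) (ha : 0 < a) (d n : ℕ) (hd : 0 < d) (hn : 0 < n)
    (s : ℂ) (hs : a + 1 < s.re) :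
    Summable (fun k : ℕ =>
      ‖if 0 < k ∧ k ≡ n [MOD d] then (sigmaR a k : ℂ) * (k : ℂ) ^ (-s) else 0‖) ∧
    (∑' k : ℕ, if 0 < k ∧ k ≡ n [MOD d] then (sigmaR a k : ℂ) * (k : ℂ) ^ (-s) else 0)
      = (d : ℂ) ^ ((a : ℂ) - 2 * s) *
          ∑ e ∈ (Finset.Icc 1 d ×ˢ Finset.Icc 1 d).filter
              (fun e : ℕ × ℕ => e.1 * e.2 ≡ n [MOD d]),
            hzeta (s - (a : ℂ)) ((e.1 : ℝ) / d) * hzeta s ((e.2 : ℝ) / d) :=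
  stmt7_general a ha d n hd s hs
end

section
/- Let d be a positive integer and let m, k, n be integers. Then S_n(m, k; d) = Σ over positive integers f dividing gcd(d, n, k) of f · K(m, k·n/f²; d/f). -/
/-!
Group the solutions `(e₁, e₂)` of `e₁ e₂ ≡ n (mod d)` by `f = gcd(e₁, d)`, which divides `n`.
Writing `d = f q`, `n = f n'`, `e₁ = f u` with `u` a unit mod `q`, and `e₂ = v + j q` with
`v < q`, `j < f`, the congruence becomes `u v ≡ n' (mod q)`, independent of `j`. The sum over `j`
is `Σ_{j<f} e(k j / f)`, which is `f` if `f ∣ k` and `0` otherwise. When `k = f k'`, the phase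
is `e((m u + k' v) / q)`, and substituting `v ≡ n' u⁻¹` turns the sum over `u` into
`K(m, k' n'; q)`.
-/

open Finset

/-- `e(x) = exp(2πix)`. -/
noncomputable def eexp (x : ℝ) : ℂ := Complex.exp (2 * Real.pi * Complex.I * x)

/-- The exponential sum `S_n(m, k; d)`: sum over residues `e₁ e₂ ≡ n (mod d)` of
`e((m e₁ + k e₂)/d)`. -/
noncomputable def expSum (n m k : ℤ) (d : ℕ) : ℂ :=
  ∑ e ∈ (Finset.range d ×ˢ Finset.range d).filter
      (fun e : ℕ × ℕ => (e.1 * e.2 : ℤ) ≡ n [ZMOD (d : ℤ)]),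
    eexp ((m * e.1 + k * e.2) / d)

/-- The Kloosterman sum `K(a, b; q)`. -/
noncomputable def kloosterman (a b : ℤ) (q : ℕ) : ℂ :=
  ∑ p ∈ (Finset.range q ×ˢ Finset.range q).filter
      (fun p : ℕ × ℕ => (p.1 * p.2 : ℤ) ≡ 1 [ZMOD (q : ℤ)]),
    eexp ((a * p.1 + b * p.2) / q)

lemma eexp_add (x y : ℝ) : eexp (x + y) = eexp x * eexp y := by
  rw [eexp, eexp, eexp, ← Complex.exp_add]
  push_cast
  ring_nf

lemma eexp_intCast_div (q : ℕ) [NeZero q] (t : ℤ) :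
    eexp (t / q) = ZMod.stdAddChar (t : ZMod q) := by
  rw [ZMod.stdAddChar_coe, eexp]
  push_cast
  ring_nf

lemma sum_range_natCast_eq_sum_zmod {M : Type*} [AddCommMonoid M] (q : ℕ) [NeZero q]
    (g : ZMod q → M) : ∑ j ∈ range q, g j = ∑ x, g x :=
  sum_nbij' Nat.cast ZMod.val (by simp) (by simp [ZMod.val_lt])
    (fun _ hj => ZMod.val_cast_of_lt (mem_range.1 hj)) (fun x _ => ZMod.natCast_zmod_val x)
    (fun _ _ => rfl)

lemma sum_range_eexp_mul_div (f : ℕ) [NeZero f] (k : ℤ) :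
    ∑ j ∈ range f, eexp (k * j / f) = if (f : ℤ) ∣ k then (f : ℂ) else 0 := by
  have hterm (j : ℕ) : eexp (k * j / f) = ZMod.stdAddChar ((j : ZMod f) * (k : ZMod f)) := by
    simpa [mul_comm] using eexp_intCast_div f (k * j)
  simp_rw [hterm, sum_range_natCast_eq_sum_zmod f (fun x => ZMod.stdAddChar (x * (k : ZMod f))),
    AddChar.sum_mulShift _ (ZMod.isPrimitive_stdAddChar f), ZMod.card,
    ZMod.intCast_zmod_eq_zero_iff_dvd, Nat.cast_ite, Nat.cast_zero]

def pairsMulModEq (d : ℕ) (n : ℤ) : Finset (ℕ × ℕ) :=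
  (range d ×ˢ range d).filter fun e => (e.1 * e.2 : ℤ) ≡ n [ZMOD d]

lemma mem_pairsMulModEq {d : ℕ} {n : ℤ} {e : ℕ × ℕ} :
    e ∈ pairsMulModEq d n ↔ e.1 < d ∧ e.2 < d ∧ (e.1 * e.2 : ℤ) ≡ n [ZMOD d] := by
  simp [pairsMulModEq, and_assoc]

lemma expSum_eq_sum_pairsMulModEq (n m k : ℤ) (d : ℕ) :
    expSum n m k d = ∑ e ∈ pairsMulModEq d n, eexp ((m * e.1 + k * e.2) / d) := rfl

lemma kloosterman_eq_sum_pairsMulModEq (a b : ℤ) (q : ℕ) :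
    kloosterman a b q = ∑ p ∈ pairsMulModEq q 1, eexp ((a * p.1 + b * p.2) / q) := rfl

lemma sum_filter_coprime_pairsMulModEq_eq_sum_range {M : Type*} [AddCommMonoid M] (q : ℕ)
    [NeZero q] (n : ℤ) (F : ℕ × ℕ → M) :
    ∑ p ∈ (pairsMulModEq q n).filter (fun p => p.1.Coprime q), F p
      = ∑ u ∈ (range q).filter (fun u => u.Coprime q),
          F (u, ((n : ZMod q) * (u : ZMod q)⁻¹).val) := by
  symm
  refine sum_nbij' (fun u => (u, ((n : ZMod q) * (u : ZMod q)⁻¹).val)) Prod.fst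
    ?_ ?_ (fun _ _ => rfl) ?_ (fun _ _ => rfl)
  · intro u hu
    simp only [mem_filter, mem_range] at hu
    simp only [mem_filter, mem_pairsMulModEq]
    refine ⟨⟨hu.1, ZMod.val_lt _, ?_⟩, hu.2⟩
    rw [← ZMod.intCast_eq_intCast_iff]
    push_cast
    rw [ZMod.natCast_val, ZMod.cast_id, mul_left_comm,
      ZMod.mul_inv_of_unit _ ((ZMod.isUnit_iff_coprime u q).2 hu.2), mul_one]
  · intro p hp
    simp only [mem_filter, mem_pairsMulModEq] at hp
    simp only [mem_filter, mem_range]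
    exact ⟨hp.1.1, hp.2⟩
  · rintro ⟨u, v⟩ hp
    simp only [mem_filter, mem_pairsMulModEq] at hp
    obtain ⟨⟨-, hv, huv⟩, hcop⟩ := hp
    rw [← ZMod.intCast_eq_intCast_iff] at huv
    push_cast at huv
    refine Prod.ext rfl ?_
    rw [← huv, mul_comm (u : ZMod q), mul_assoc,
      ZMod.mul_inv_of_unit _ ((ZMod.isUnit_iff_coprime u q).2 hcop), mul_one,
      ZMod.val_cast_of_lt hv]

lemma filter_coprime_pairsMulModEq_one (q : ℕ) :
    (pairsMulModEq q 1).filter (fun p => p.1.Coprime q) = pairsMulModEq q 1 := by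
  refine filter_true_of_mem fun p hp => ?_
  have hmul := (mem_pairsMulModEq.1 hp).2.2
  rw [← ZMod.intCast_eq_intCast_iff] at hmul
  push_cast at hmul
  exact (ZMod.isUnit_iff_coprime _ _).1 (IsUnit.of_mul_eq_one _ hmul)

lemma sum_filter_coprime_pairsMulModEq_eexp_eq_kloosterman (q : ℕ) [NeZero q] (a b n : ℤ) :
    ∑ p ∈ (pairsMulModEq q n).filter (fun p => p.1.Coprime q), eexp ((a * p.1 + b * p.2) / q)
      = kloosterman a (b * n) q := by
  rw [kloosterman_eq_sum_pairsMulModEq, ← filter_coprime_pairsMulModEq_one,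
    sum_filter_coprime_pairsMulModEq_eq_sum_range,
    sum_filter_coprime_pairsMulModEq_eq_sum_range]
  refine sum_congr rfl fun u _ => ?_
  rw [← Int.cast_natCast (R := ℝ) u, ← Int.cast_natCast (R := ℝ) (ZMod.val _),
    ← Int.cast_natCast (R := ℝ) (ZMod.val _)]
  simp only [← Int.cast_mul, ← Int.cast_add, eexp_intCast_div]
  push_cast
  simp only [ZMod.natCast_val, ZMod.cast_id', id, one_mul]
  ring_nf

lemma natCast_mul_modEq_iff_mod {f q : ℕ} (hf : 0 < f) (u b : ℕ) (n : ℤ) :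
    (((f * u : ℕ) : ℤ) * b ≡ f * n [ZMOD (f * q : ℕ)]) ↔
      ((u * (b % q : ℕ) : ℤ) ≡ n [ZMOD q]) := by
  have hmod : ((u * (b % q : ℕ) : ℤ) ≡ u * b [ZMOD q]) := by
    rw [Int.natCast_mod]
    exact (Int.mod_modEq _ _).mul_left _
  push_cast
  rw [mul_assoc, Int.ModEq.mul_left_cancel_iff' (by positivity)]
  exact ⟨hmod.trans, hmod.symm.trans⟩

lemma sum_filter_gcd_pairsMulModEq_eq_sum_product {M : Type*} [AddCommMonoid M] {f q : ℕ}
    (hf : 0 < f) (hq : 0 < q) (n : ℤ) (F : ℕ × ℕ → M) :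
    ∑ e ∈ (pairsMulModEq (f * q) (f * n)).filter (fun e => e.1.gcd (f * q) = f), F e
      = ∑ x ∈ (pairsMulModEq q n).filter (fun p => p.1.Coprime q) ×ˢ range f,
          F (f * x.1.1, x.1.2 + x.2 * q) := by
  symm
  refine sum_nbij' (fun x => (f * x.1.1, x.1.2 + x.2 * q)) (fun e => ((e.1 / f, e.2 % q), e.2 / q))
    ?_ ?_ ?_ ?_ (fun _ _ => rfl)
  · rintro ⟨⟨u, v⟩, j⟩ hx
    simp only [mem_product, mem_filter, mem_pairsMulModEq, mem_range] at hx ⊢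
    obtain ⟨⟨⟨hu, hv, huv⟩, hcop⟩, hj⟩ := hx
    have hvj : v + j * q < f * q := by nlinarith
    refine ⟨⟨Nat.mul_lt_mul_of_pos_left hu hf, hvj, ?_⟩, ?_⟩
    · rwa [natCast_mul_modEq_iff_mod hf, Nat.add_mul_mod_self_right, Nat.mod_eq_of_lt hv]
    · rw [Nat.gcd_mul_left, hcop, mul_one]
  · rintro ⟨a, b⟩ he
    simp only [mem_product, mem_filter, mem_pairsMulModEq, mem_range] at he ⊢
    obtain ⟨⟨ha, hb, hab⟩, hgcd⟩ := he
    obtain ⟨u, rfl⟩ : f ∣ a := hgcd ▸ Nat.gcd_dvd_left a (f * q)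
    rw [Nat.gcd_mul_left, Nat.mul_eq_left hf.ne'] at hgcd
    rw [Nat.mul_div_cancel_left u hf]
    refine ⟨⟨⟨by nlinarith, Nat.mod_lt _ hq, (natCast_mul_modEq_iff_mod hf u b n).1 hab⟩,
      hgcd⟩, (Nat.div_lt_iff_lt_mul hq).2 (by linarith)⟩
  · rintro ⟨⟨u, v⟩, j⟩ hx
    simp only [mem_product, mem_filter, mem_pairsMulModEq, mem_range] at hx
    simp [Nat.mul_div_cancel_left u hf, Nat.add_mul_div_right v j hq, Nat.mod_eq_of_lt hx.1.1.2.1,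
      Nat.div_eq_of_lt hx.1.1.2.1]
  · rintro ⟨a, b⟩ he
    simp only [mem_filter] at he
    exact Prod.ext (Nat.mul_div_cancel' (he.2 ▸ Nat.gcd_dvd_left a (f * q)))
      (Nat.mod_add_div' b q)

lemma natCast_gcd_fst_dvd_of_mem_pairsMulModEq {d : ℕ} {n : ℤ} {e : ℕ × ℕ}
    (he : e ∈ pairsMulModEq d n) : ((e.1.gcd d : ℕ) : ℤ) ∣ n := by
  have hd : (d : ℤ) ∣ n - e.1 * e.2 := (mem_pairsMulModEq.1 he).2.2.dvd
  have h₁ : ((e.1.gcd d : ℕ) : ℤ) ∣ e.1 * e.2 :=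
    (Int.natCast_dvd_natCast.2 (Nat.gcd_dvd_left _ _)).mul_right _
  have h₂ : ((e.1.gcd d : ℕ) : ℤ) ∣ n - e.1 * e.2 :=
    (Int.natCast_dvd_natCast.2 (Nat.gcd_dvd_right _ _)).trans hd
  simpa using dvd_add h₁ h₂

lemma sum_filter_gcd_eexp_eq_ite_kloosterman {d f : ℕ} (hd : 0 < d) (hfd : f ∣ d) {n : ℤ}
    (hfn : (f : ℤ) ∣ n) (m k : ℤ) :
    ∑ e ∈ (pairsMulModEq d n).filter (fun e => e.1.gcd d = f), eexp ((m * e.1 + k * e.2) / d)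
      = if (f : ℤ) ∣ k then f * kloosterman m (k * n / f ^ 2) (d / f) else 0 := by
  obtain ⟨q, rfl⟩ := hfd
  obtain ⟨n', rfl⟩ := hfn
  have hf : 0 < f := Nat.pos_of_mul_pos_right hd
  have hq : 0 < q := Nat.pos_of_mul_pos_left hd
  have : NeZero f := ⟨hf.ne'⟩
  have : NeZero q := ⟨hq.ne'⟩
  have hsplit (u v j : ℕ) : eexp ((m * ↑(f * u) + k * ↑(v + j * q)) / ↑(f * q))
      = eexp ((m * ↑(f * u) + k * v) / ↑(f * q)) * eexp (k * j / f) := by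
    rw [← eexp_add]
    congr 1
    push_cast
    field_simp
    ring
  rw [sum_filter_gcd_pairsMulModEq_eq_sum_product hf hq, sum_product,
    Nat.mul_div_cancel_left q hf]
  simp_rw [hsplit, ← mul_sum, sum_range_eexp_mul_div]
  split_ifs with hk
  · obtain ⟨k', rfl⟩ := hk
    rw [show f * k' * (f * n') / (f : ℤ) ^ 2 = k' * n' by
        rw [show f * k' * (f * n') = (f : ℤ) ^ 2 * (k' * n') by ring,
          Int.mul_ediv_cancel_left _ (by positivity)],
      ← sum_filter_coprime_pairsMulModEq_eexp_eq_kloosterman, mul_sum]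
    refine sum_congr rfl fun p _ => ?_
    rw [mul_comm]
    congr 2
    push_cast
    field_simp
  · simp

theorem stmt10_general (d : ℕ) (m k n : ℤ) :
    expSum n m k d
      = ∑ f ∈ (Nat.gcd d (Int.gcd n k)).divisors,
          (f : ℂ) * kloosterman m (k * n / (f : ℤ) ^ 2) (d / f) := by
  rcases Nat.eq_zero_or_pos d with rfl | hd
  · simp [expSum, kloosterman]
  have hmaps : ∀ e ∈ pairsMulModEq d n, e.1.gcd d ∈ (d.gcd n.natAbs).divisors := fun e he =>
    Nat.mem_divisors.2 ⟨Nat.dvd_gcd (Nat.gcd_dvd_right _ _)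
      (Int.natCast_dvd.1 (natCast_gcd_fst_dvd_of_mem_pairsMulModEq he)),
      Nat.gcd_ne_zero_left hd.ne'⟩
  have hdivisors : (d.gcd (n.gcd k)).divisors
      = (d.gcd n.natAbs).divisors.filter (fun f : ℕ => (f : ℤ) ∣ k) := by
    ext f
    simp [Nat.dvd_gcd_iff, Int.gcd, Int.natCast_dvd, hd.ne', and_assoc]
  rw [expSum_eq_sum_pairsMulModEq, ← sum_fiberwise_of_maps_to hmaps, hdivisors, sum_filter]
  refine sum_congr rfl fun f hf => ?_
  obtain ⟨hfd, hfn⟩ := Nat.dvd_gcd_iff.1 (Nat.dvd_of_mem_divisors hf)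
  exact sum_filter_gcd_eexp_eq_ite_kloosterman hd hfd (Int.natCast_dvd.2 hfn) m k

theorem stmt10 (d : ℕ) (hd : 0 < d) (m k n : ℤ) :
    expSum n m k d
      = ∑ f ∈ (Nat.gcd d (Int.gcd n k)).divisors,
          (f : ℂ) * kloosterman m (k * n / (f : ℤ) ^ 2) (d / f) :=
  stmt10_general d m k n
end

section
/- Let a be an odd positive integer, let m ≥ 0 be an integer, and let d and n be positive integers. Then Σ over pairs (e₁, e₂) with 1 ≤ e₁, e₂ ≤ d and e₁e₂ ≡ n (mod d) of ζ(−m−a, e₁/d)·ζ(−m, e₂/d) equals −(1/2)·d^{−a}·ζ(−a) if m = 0 and d divides n, and equals 0 otherwise. -/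
open Finset

/-!
The negation `(u, v) ↦ (-u, -v)` of `ZMod d × ZMod d` preserves `u * v = n`. Since the even and
odd parts of the Hurwitz zeta function vanish at the negative even, resp. odd, integers, we have
`ζ(-k, -x) = (-1)^(k+1) ζ(-k, x)`, so for odd `a` the summand changes sign under the negation and
the terms cancel in pairs. The only exception is `ζ(0, 0)`, met exactly when `m = 0` and `v = 0`,
which forces `d ∣ n`; the surviving terms then add up to `-1/2 * ∑ᵤ ζ(-a, u/d) = -1/2 * d^(-a) ζ(-a)`
by the distribution relation `∑_{j mod d} ζ(s, j/d) = d^s ζ(s)`, which holds for `Re s > 1` and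
extends to `s ≠ 1` by analytic continuation.
-/

open HurwitzZeta

theorem Finset.sum_eq_zero_of_apply_neg {α β : Type*} [InvolutiveNeg α] [AddCommGroup β]
    [IsAddTorsionFree β] {s : Finset α} {f : α → β} (hs : ∀ x ∈ s, -x ∈ s)
    (hf : ∀ x ∈ s, f (-x) = -f x) : ∑ x ∈ s, f x = 0 := by
  have h : ∑ x ∈ s, f x = ∑ x ∈ s, f (-x) :=
    sum_nbij' (-·) (-·) hs hs (by simp) (by simp) (by simp)
  rwa [sum_congr rfl hf, sum_neg_distrib, self_eq_neg] at h

namespace HurwitzZeta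

lemma hurwitzZetaOdd_neg_natCast_of_odd (x : UnitAddCircle) {k : ℕ} (hk : Odd k) :
    hurwitzZetaOdd x (-k) = 0 := by
  obtain ⟨l, rfl⟩ := hk
  convert hurwitzZetaOdd_neg_two_mul_nat_sub_one x l using 2
  push_cast
  ring

lemma hurwitzZetaEven_neg_natCast_of_even (x : UnitAddCircle) {k : ℕ} (hk : Even k)
    (hkx : k ≠ 0 ∨ x ≠ 0) : hurwitzZetaEven x (-k) = 0 := by
  obtain ⟨_ | l, rfl⟩ := hk
  · simpa [hurwitzZetaEven_apply_zero] using hkx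
  · convert hurwitzZetaEven_neg_two_mul_nat_add_one x l using 2
    push_cast
    ring

lemma hurwitzZeta_neg_apply_neg_natCast (x : UnitAddCircle) (k : ℕ) (hkx : k ≠ 0 ∨ x ≠ 0) :
    hurwitzZeta (-x) (-k) = (-1) ^ (k + 1) * hurwitzZeta x (-k) := by
  simp only [hurwitzZeta, hurwitzZetaEven_neg, hurwitzZetaOdd_neg]
  rcases k.even_or_odd with hk | hk
  · rw [hurwitzZetaEven_neg_natCast_of_even x hk hkx, hk.add_one.neg_one_pow]
    ring
  · rw [hurwitzZetaOdd_neg_natCast_of_odd x hk, hk.add_one.neg_one_pow]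
    ring

lemma hurwitzZeta_neg_mul_hurwitzZeta_neg {a : ℕ} (ha : Odd a) (m : ℕ) {x y : UnitAddCircle}
    (hy : m ≠ 0 ∨ y ≠ 0) :
    hurwitzZeta (-x) (-m - a) * hurwitzZeta (-y) (-m) =
      -(hurwitzZeta x (-m - a) * hurwitzZeta y (-m)) := by
  have hma : -(m : ℂ) - a = -((m + a : ℕ) : ℂ) := by push_cast; ring
  have hsign : (-1 : ℂ) ^ (m + a + 1) * (-1) ^ (m + 1) = -1 := by
    rw [← pow_add, show m + a + 1 + (m + 1) = a + 2 * (m + 1) by ring]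
    exact (ha.add_even (even_two_mul _)).neg_one_pow
  rw [hma, hurwitzZeta_neg_apply_neg_natCast x _ (.inl (by have := ha.pos; omega)),
    hurwitzZeta_neg_apply_neg_natCast y m hy]
  linear_combination (hurwitzZeta x (-(m + a : ℕ)) * hurwitzZeta y (-m)) * hsign

end HurwitzZeta

namespace ZMod

lemma val_natCast_sub_one_add_one {N e : ℕ} (he : e ∈ Icc 1 N) :
    ((e : ZMod N) - 1).val + 1 = e := by
  obtain ⟨k, rfl⟩ := Nat.exists_eq_add_one.mpr (mem_Icc.mp he).1
  have hk : k < N := (mem_Icc.mp he).2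
  simp [val_natCast, Nat.mod_eq_of_lt hk]

variable {N : ℕ} [NeZero N]

lemma LFunction_one_eq_riemannZeta {s : ℂ} (hs : s ≠ 1) :
    LFunction (1 : ZMod N → ℂ) s = riemannZeta s := by
  have hpc : IsPreconnected ({1}ᶜ : Set ℂ) :=
    (isConnected_compl_singleton_of_one_lt_rank (Complex.rank_real_complex ▸ Nat.one_lt_ofNat) _)
      |>.isPreconnected
  refine AnalyticOnNhd.eqOn_of_preconnected_of_eventuallyEq (𝕜 := ℂ) ?_ ?_ hpc
    (by norm_num : (2 : ℂ) ∈ ({1}ᶜ : Set ℂ)) ?_ hs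
  · refine DifferentiableOn.analyticOnNhd (fun s hs ↦ ?_) isOpen_compl_singleton
    exact (differentiableAt_LFunction _ _ (.inl hs)).differentiableWithinAt
  · refine DifferentiableOn.analyticOnNhd (fun s hs ↦ ?_) isOpen_compl_singleton
    exact (differentiableAt_riemannZeta hs).differentiableWithinAt
  · refine Filter.eventually_of_mem ?_ (fun t (ht : 1 < t.re) ↦ ?_)
    · exact (Complex.continuous_re.isOpen_preimage _ isOpen_Ioi).mem_nhds (by simp)
    · rw [LFunction_eq_LSeries _ ht, ← LSeries_one_eq_riemannZeta ht]
      rfl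

lemma sum_hurwitzZeta_toAddCircle {s : ℂ} (hs : s ≠ 1) :
    ∑ j : ZMod N, hurwitzZeta (toAddCircle j) s = N ^ s * riemannZeta s := by
  have hN : (N : ℂ) ^ s ≠ 0 := by simp [(NeZero.ne N : N ≠ 0)]
  rw [← LFunction_one_eq_riemannZeta (N := N) hs, LFunction, ← mul_assoc, Complex.cpow_neg,
    mul_inv_cancel₀ hN, one_mul]
  simp

lemma sum_Icc_product_filter_modEq {M : Type*} [AddCommMonoid M] (n : ℕ) (f : ZMod N → ZMod N → M) :
    ∑ e ∈ (Icc 1 N ×ˢ Icc 1 N).filter (fun e : ℕ × ℕ => e.1 * e.2 ≡ n [MOD N]),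
      f e.1 e.2 = ∑ x ∈ univ.filter (fun x : ZMod N × ZMod N => x.1 * x.2 = n), f x.1 x.2 := by
  have hIcc (x : ZMod N) : (x - 1).val + 1 ∈ Icc 1 N := mem_Icc.mpr ⟨by omega, (x - 1).val_lt⟩
  refine sum_nbij' (fun e => ((e.1 : ZMod N), (e.2 : ZMod N)))
    (fun x => ((x.1 - 1).val + 1, (x.2 - 1).val + 1)) ?_ ?_ ?_ ?_ (fun _ _ => rfl)
  · intro e he
    simp only [mem_filter, mem_product] at he
    simpa [← natCast_eq_natCast_iff] using he.2
  · intro x hx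
    simp only [mem_filter, mem_univ, true_and] at hx
    simp [hIcc, ← natCast_eq_natCast_iff, hx]
  · intro e he
    simp only [mem_filter, mem_product] at he
    simp [val_natCast_sub_one_add_one he.1.1, val_natCast_sub_one_add_one he.1.2]
  · intro x _
    simp

end ZMod

namespace HurwitzZeta

variable {N : ℕ} [NeZero N] {a : ℕ}

lemma sum_hurwitzZeta_toAddCircle_mul_eq_zero (ha : Odd a) (m : ℕ) {s : Finset (ZMod N × ZMod N)}
    (hs : ∀ x ∈ s, -x ∈ s) (hm : ∀ x ∈ s, m ≠ 0 ∨ x.2 ≠ 0) :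
    ∑ x ∈ s, hurwitzZeta (ZMod.toAddCircle x.1) (-m - a) *
      hurwitzZeta (ZMod.toAddCircle x.2) (-m) = 0 :=
  sum_eq_zero_of_apply_neg hs fun x hx => by
    simp only [Prod.fst_neg, Prod.snd_neg, map_neg]
    exact hurwitzZeta_neg_mul_hurwitzZeta_neg ha m (by simpa using hm x hx)

theorem sum_hurwitzZeta_mul_hurwitzZeta_of_mul_eq (ha : Odd a) (m : ℕ) (r : ZMod N) :
    ∑ x ∈ univ.filter (fun x : ZMod N × ZMod N => x.1 * x.2 = r),
      hurwitzZeta (ZMod.toAddCircle x.1) (-m - a) * hurwitzZeta (ZMod.toAddCircle x.2) (-m) =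
      if m = 0 ∧ r = 0 then -(1 / 2) * (N : ℂ) ^ (-(a : ℂ)) * riemannZeta (-a) else 0 := by
  split_ifs with h
  · obtain ⟨rfl, rfl⟩ := h
    rw [← sum_filter_not_add_sum_filter _ (fun x => x.2 = 0),
      sum_hurwitzZeta_toAddCircle_mul_eq_zero ha 0 (by simp) (by simp), zero_add]
    have hfiber : ∑ x ∈ (univ.filter fun x : ZMod N × ZMod N => x.1 * x.2 = 0).filter (·.2 = 0),
        hurwitzZeta (ZMod.toAddCircle x.1) (-(0 : ℕ) - a) *
          hurwitzZeta (ZMod.toAddCircle x.2) (-(0 : ℕ)) =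
        ∑ u : ZMod N, hurwitzZeta (ZMod.toAddCircle u) (-a) * hurwitzZeta 0 0 := by
      refine sum_nbij' Prod.fst (·, 0) (by simp) (by simp)
        (fun x hx => Prod.ext rfl (mem_filter.mp hx).2.symm) (by simp) (fun x hx => ?_)
      simp [(mem_filter.mp hx).2]
    have ha1 : -(a : ℂ) ≠ 1 := by rw [ne_eq, neg_eq_iff_eq_neg]; norm_cast
    rw [hfiber, ← sum_mul, ZMod.sum_hurwitzZeta_toAddCircle ha1, hurwitzZeta_zero,
      riemannZeta_zero]
    ring
  · refine sum_hurwitzZeta_toAddCircle_mul_eq_zero ha m (by simp) fun x hx => ?_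
    by_contra! hx0
    rw [mem_filter, hx0.2, mul_zero] at hx
    exact h ⟨hx0.1, hx.2.symm⟩

end HurwitzZeta

theorem stmt13_general (a : ℕ) (haodd : Odd a) (m : ℕ) (d n : ℕ)
    (hd : 0 < d) :
    ∑ e ∈ (Finset.Icc 1 d ×ˢ Finset.Icc 1 d).filter
        (fun e : ℕ × ℕ => e.1 * e.2 ≡ n [MOD d]),
      hzeta (-(m : ℂ) - a) ((e.1 : ℝ) / d) * hzeta (-(m : ℂ)) ((e.2 : ℝ) / d)
      = if m = 0 ∧ d ∣ n then
          -(1 / 2) * ((d : ℝ) ^ (-(a : ℝ)) : ℝ) * riemannZeta (-(a : ℂ))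
        else 0 := by
  have : NeZero d := ⟨hd.ne'⟩
  simp only [hzeta, ← ZMod.toAddCircle_natCast]
  rw [ZMod.sum_Icc_product_filter_modEq n
      (fun u v => hurwitzZeta (ZMod.toAddCircle u) _ * hurwitzZeta (ZMod.toAddCircle v) _),
    sum_hurwitzZeta_mul_hurwitzZeta_of_mul_eq haodd]
  simp only [ZMod.natCast_eq_zero_iff, Complex.ofReal_cpow d.cast_nonneg]
  push_cast
  rfl

theorem stmt13 (a : ℕ) (haodd : Odd a) (hapos : 0 < a) (m : ℕ) (d n : ℕ)
    (hd : 0 < d) (hn : 0 < n) :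
    ∑ e ∈ (Finset.Icc 1 d ×ˢ Finset.Icc 1 d).filter
        (fun e : ℕ × ℕ => e.1 * e.2 ≡ n [MOD d]),
      hzeta (-(m : ℂ) - a) ((e.1 : ℝ) / d) * hzeta (-(m : ℂ)) ((e.2 : ℝ) / d)
      = if m = 0 ∧ d ∣ n then
          -(1 / 2) * ((d : ℝ) ^ (-(a : ℝ)) : ℝ) * riemannZeta (-(a : ℂ))
        else 0 :=
  stmt13_general a haodd m d n hd
end
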